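/- arXiv:2509.19321 — 2 statements merged into one kernel-verified Lean document; each statement's English description precedes it below -/
import Mathlib

section
/- Suppose q : ℕ → ℝ is non-increasing with q_k ≥ 0 for all k and q_0 > 0. Then for every f ∈ L¹(G_m,μ), every n ≥ 1 and every x ∈ G_m, |T_n f(x)| ≤ σ*f(x); consequently T*f(x) ≤ σ*f(x) for every x ∈ G_m. -/
open MeasureTheory Complex Finset ENNReal

noncomputable section

namespace VilenkinT

variable (m : ℕ → ℕ)

/-- The generalized powers `M_0 = 1`, `M_{k+1} = m_k M_k`. -/
def Mgen : ℕ → ℕ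
  | 0 => 1
  | k + 1 => m k * Mgen k

/-- The Vilenkin group (as a measurable space of coordinate sequences). -/
abbrev G := ∀ k : ℕ, Fin (m k)

/-- The `j`-th digit of `n` in the generalized number system based on `m`. -/
def digit (n j : ℕ) : ℕ := n / Mgen m j % m j

/-- The Vilenkin system `ψ_n(x) = ∏_k exp(2πi n_k x_k / m_k)`. -/
def psi (n : ℕ) (x : G m) : ℂ :=
  ∏' k : ℕ, Complex.exp (2 * Real.pi * Complex.I * (digit m n k : ℂ) * ((x k : ℕ) : ℂ) / (m k : ℂ))

/-- Partial sums of the Vilenkin–Fourier series built from coefficients `fhat`. -/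
def partialSum (fhat : ℕ → ℂ) (n : ℕ) (x : G m) : ℂ :=
  ∑ k ∈ Finset.range n, fhat k * psi m k x

/-- `Q_n := ∑_{k=0}^{n-1} q_k`. -/
def Qsum (q : ℕ → ℝ) (n : ℕ) : ℝ := ∑ k ∈ Finset.range n, q k

/-- The `T`-means `T_n f = (1/Q_n) ∑_{k=0}^{n-1} q_k S_k f`. -/
def Tmean (q : ℕ → ℝ) (fhat : ℕ → ℂ) (n : ℕ) (x : G m) : ℂ :=
  (1 / (Qsum q n : ℂ)) * ∑ k ∈ Finset.range n, (q k : ℂ) * partialSum m fhat k x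

/-- The maximal operator `T^* f = sup_{n ≥ 1} |T_n f|` (with values in `ℝ≥0∞`). -/
def Tstar (q : ℕ → ℝ) (fhat : ℕ → ℂ) (x : G m) : ℝ≥0∞ :=
  ⨆ (n : ℕ) (_ : 1 ≤ n), ENNReal.ofReal (‖Tmean m q fhat n x‖)

/-- The weak-`L_p` norm `sup_{t>0} t μ(g > t)^{1/p}` of an `ℝ≥0∞`-valued function. -/
def weakNorm (μ : Measure (G m)) (p : ℝ) (g : G m → ℝ≥0∞) : ℝ≥0∞ :=
  ⨆ (t : ℝ) (_ : 0 < t), ENNReal.ofReal t * (μ {x | ENNReal.ofReal t < g x}) ^ (1 / p)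

/-- The weak-`L_p` norm of a complex valued function. -/
def weakNormC (μ : Measure (G m)) (p : ℝ) (g : G m → ℂ) : ℝ≥0∞ :=
  weakNorm m μ p fun x => ENNReal.ofReal (‖g x‖)

/-- `μ` is the product of the uniform probability measures on the coordinates:
it is a probability measure giving each cylinder of length `n` measure `1/M_n`. -/
def IsHaar (μ : Measure (G m)) : Prop :=
  IsProbabilityMeasure μ ∧
    ∀ (n : ℕ) (x : G m), μ {y | ∀ i < n, y i = x i} = ((Mgen m n : ℝ≥0∞))⁻¹

/-- The σ-algebra generated by the first `n` coordinates. -/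
def coordMS (n : ℕ) : MeasurableSpace (G m) :=
  MeasurableSpace.comap (fun x (i : Fin n) => x i) inferInstance

/-- `f = (f^{(n)})` is a martingale with respect to the filtration of coordinate σ-algebras. -/
def IsVMartingale (μ : Measure (G m)) (f : ℕ → G m → ℂ) : Prop :=
  (∀ n, Integrable (f n) μ) ∧ (∀ n, StronglyMeasurable[coordMS m n] (f n)) ∧
    ∀ n, μ[f (n + 1)|coordMS m n] =ᵐ[μ] f n

/-- `fhat` is the coefficient function of the martingale `f`. -/
def IsCoeff (μ : Measure (G m)) (f : ℕ → G m → ℂ) (fhat : ℕ → ℂ) : Prop :=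
  ∀ k i, i < Mgen m k → fhat i = ∫ x, f k x * (starRingEnd ℂ) (psi m i x) ∂μ

/-- The martingale Hardy space (quasi-)norm `‖f‖_{H_p} = (∫ (sup_n |f^{(n)}|)^p dμ)^{1/p}`. -/
def HardyNorm (μ : Measure (G m)) (p : ℝ) (f : ℕ → G m → ℂ) : ℝ≥0∞ :=
  (∫⁻ x, (⨆ n, ENNReal.ofReal (‖f n x‖)) ^ p ∂μ) ^ (1 / p)

/-- The Vilenkin–Fourier coefficients of an integrable function. -/
def fourierCoeff (μ : Measure (G m)) (f : G m → ℂ) (n : ℕ) : ℂ :=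
  ∫ x, f x * (starRingEnd ℂ) (psi m n x) ∂μ

/-- The Fejér means `σ_n f = (1/n) ∑_{k=1}^n S_k f`. -/
def sigmaMean (fhat : ℕ → ℂ) (n : ℕ) (x : G m) : ℂ :=
  (1 / (n : ℂ)) * ∑ k ∈ Finset.Icc 1 n, partialSum m fhat k x

/-- The maximal Fejér operator `σ^* f = sup_{n ≥ 1} |σ_n f|`. -/
def sigmaStar (fhat : ℕ → ℂ) (x : G m) : ℝ≥0∞ :=
  ⨆ (n : ℕ) (_ : 1 ≤ n), ENNReal.ofReal (‖sigmaMean m fhat n x‖)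

/-- `l_n := ∑_{k=1}^{n-1} 1/k`. -/
def lsum (n : ℕ) : ℝ := ∑ k ∈ Finset.Icc 1 (n - 1), (1 : ℝ) / k

/-- The Riesz logarithmic means `R_n f = (1/l_n) ∑_{k=1}^{n-1} S_k f / k`. -/
def Riesz (fhat : ℕ → ℂ) (n : ℕ) (x : G m) : ℂ :=
  (1 / (lsum n : ℂ)) * ∑ k ∈ Finset.Icc 1 (n - 1), partialSum m fhat k x / (k : ℂ)

/-- The maximal Riesz operator `R^* f = sup_{n ≥ 2} |R_n f|`. -/
def RieszStar (fhat : ℕ → ℂ) (x : G m) : ℝ≥0∞ :=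
  ⨆ (n : ℕ) (_ : 2 ≤ n), ENNReal.ofReal (‖Riesz m fhat n x‖)

/-- The Cesàro numbers `A_n^α = ∏_{j=1}^n (α+j)/j`. -/
def Aces (α : ℝ) (n : ℕ) : ℝ := ∏ j ∈ Finset.Icc 1 n, (α + j) / j

/-- The means `U_n^α f = (1/A_n^α) ∑_{k=0}^{n-1} A_k^{α-1} S_k f`. -/
def Umean (α : ℝ) (fhat : ℕ → ℂ) (n : ℕ) (x : G m) : ℂ :=
  (1 / (Aces α n : ℂ)) * ∑ k ∈ Finset.range n, (Aces (α - 1) k : ℂ) * partialSum m fhat k x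

/-- The maximal operator `U^{α,*} f = sup_{n ≥ 1} |U_n^α f|`. -/
def Ustar (α : ℝ) (fhat : ℕ → ℂ) (x : G m) : ℝ≥0∞ :=
  ⨆ (n : ℕ) (_ : 1 ≤ n), ENNReal.ofReal (‖Umean m α fhat n x‖)

/-- The weights `q_0 = 1`, `q_k = k^{α-1}` generating the means `V_n^α`. -/
def qV (α : ℝ) (k : ℕ) : ℝ := if k = 0 then 1 else (k : ℝ) ^ (α - 1)

/-- The weights `q_k = max(0, log^{(β)}(k^α))` generating the means `B_n^{α,β}`. -/
def qB (α : ℝ) (β : ℕ) (k : ℕ) : ℝ := max 0 (Real.log^[β] ((k : ℝ) ^ α))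

/-- The maximal operator `B^{α,β,*} f = sup_{n : Q_n > 0} |B_n^{α,β} f|`. -/
def Bstar (α : ℝ) (β : ℕ) (fhat : ℕ → ℂ) (x : G m) : ℝ≥0∞ :=
  ⨆ (n : ℕ) (_ : 0 < Qsum (qB α β) n), ENNReal.ofReal (‖Tmean m (qB α β) fhat n x‖)

open Classical in
/-- The coefficient function `ĉ` of the counterexample martingale:
`ĉ(v) = M_{α_k}^{1/p-1}/α_k` for `M_{α_k} ≤ v < M_{α_k + 1}`, and `0` otherwise. -/
def chat (p : ℝ) (a : ℕ → ℕ) (v : ℕ) : ℝ :=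
  if h : ∃ k, Mgen m (a k) ≤ v ∧ v < Mgen m (a k + 1) then
    (Mgen m (a h.choose) : ℝ) ^ (1 / p - 1) / (a h.choose : ℝ)
  else 0

/-! Abel summation writes `∑_{k<n} q_k S_k` as `q_{n-1} F_{n-1} + ∑_{i<n-1} (q_i - q_{i+1}) F_i`
with `F_j = S_0 + ⋯ + S_j = j σ_j`. For non-increasing `q ≥ 0` all coefficients are non-negative,
so the norm is at most `σ^*` times `(n-1) q_{n-1} + ∑_{i<n-1} (q_i - q_{i+1}) i = q_1 + ⋯ + q_{n-1}`,
which is at most `Q_n`. -/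

section AbelSummation

variable {E : Type*} [SeminormedAddCommGroup E] [NormedSpace ℝ E]

lemma sum_range_sub_succ_mul_natCast (q : ℕ → ℝ) (p : ℕ) :
    ∑ i ∈ range p, (q i - q (i + 1)) * i = ∑ i ∈ range p, q (i + 1) - p * q p := by
  induction p with
  | zero => simp
  | succ p ih =>
    rw [sum_range_succ, ih, sum_range_succ]
    push_cast
    ring

lemma norm_sum_smul_le_of_antitone {q : ℕ → ℝ} (hq : Antitone q) (hq_nonneg : ∀ k, 0 ≤ q k)
    {S : ℕ → E} {s : ℝ} (hS : ∀ j, ‖∑ i ∈ range (j + 1), S i‖ ≤ j * s) (n : ℕ) :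
    ‖∑ i ∈ range n, q i • S i‖ ≤ s * ∑ i ∈ range n, q i := by
  have hs : 0 ≤ s := by simpa using (norm_nonneg _).trans (hS 1)
  obtain _ | p := n
  · simp
  have hdrop : ∀ i, 0 ≤ q i - q (i + 1) := fun i => sub_nonneg.mpr (hq i.le_succ)
  rw [sum_range_by_parts, Nat.add_sub_cancel]
  calc ‖q p • ∑ i ∈ range (p + 1), S i
        - ∑ i ∈ range p, (q (i + 1) - q i) • ∑ j ∈ range (i + 1), S j‖
      ≤ q p * (p * s) + ∑ i ∈ range p, (q i - q (i + 1)) * (i * s) := by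
        refine (norm_sub_le _ _).trans (add_le_add ?_ ((norm_sum_le _ _).trans ?_))
        · rw [norm_smul, Real.norm_of_nonneg (hq_nonneg p)]
          exact mul_le_mul_of_nonneg_left (hS p) (hq_nonneg p)
        · refine sum_le_sum fun i _ => ?_
          rw [norm_smul, Real.norm_eq_abs, abs_sub_comm, abs_of_nonneg (hdrop i)]
          exact mul_le_mul_of_nonneg_left (hS i) (hdrop i)
    _ = s * ∑ i ∈ range p, q (i + 1) := by
        simp_rw [← mul_assoc, ← sum_mul, sum_range_sub_succ_mul_natCast]
        ring
    _ ≤ s * ∑ i ∈ range (p + 1), q i := by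
        rw [sum_range_succ' q]
        exact mul_le_mul_of_nonneg_left (le_add_of_nonneg_right (hq_nonneg 0)) hs

end AbelSummation

lemma sum_range_succ_partialSum (fhat : ℕ → ℂ) (k : ℕ) (x : G m) :
    ∑ j ∈ range (k + 1), partialSum m fhat j x = k * sigmaMean m fhat k x := by
  rcases k.eq_zero_or_pos with rfl | hk
  · simp [partialSum]
  rw [sigmaMean, ← mul_assoc, mul_one_div_cancel (Nat.cast_ne_zero.mpr hk.ne'), one_mul,
    range_eq_Ico, sum_eq_sum_Ico_succ_bot (Nat.add_one_pos k), zero_add, Ico_add_one_right_eq_Icc]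
  simp [partialSum]

lemma ofReal_norm_sigmaMean_le_sigmaStar {fhat : ℕ → ℂ} {x : G m} {k : ℕ} (hk : 1 ≤ k) :
    ENNReal.ofReal ‖sigmaMean m fhat k x‖ ≤ sigmaStar m fhat x :=
  le_iSup₂ (f := fun n (_ : 1 ≤ n) => ENNReal.ofReal ‖sigmaMean m fhat n x‖) k hk

lemma norm_Tmean_le {q : ℕ → ℝ} (hq : Antitone q) (hq_nonneg : ∀ k, 0 ≤ q k) {fhat : ℕ → ℂ}
    {x : G m} {s : ℝ} (hσ : ∀ k, 1 ≤ k → ‖sigmaMean m fhat k x‖ ≤ s) (n : ℕ) :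
    ‖Tmean m q fhat n x‖ ≤ s := by
  -- when `Qsum q n = 0`, `Tmean` is `0` because `1 / 0 = 0`
  have hS : ∀ j, ‖∑ i ∈ range (j + 1), partialSum m fhat i x‖ ≤ j * s := by
    intro j
    rw [sum_range_succ_partialSum, norm_mul, Complex.norm_natCast]
    rcases j.eq_zero_or_pos with rfl | hj
    · simp
    exact mul_le_mul_of_nonneg_left (hσ j hj) j.cast_nonneg
  have hnum := norm_sum_smul_le_of_antitone hq hq_nonneg hS n
  simp_rw [Complex.real_smul] at hnum
  have hQ : 0 ≤ Qsum q n := sum_nonneg fun k _ => hq_nonneg k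
  rw [Tmean, norm_mul, one_div, norm_inv, Complex.norm_real, Real.norm_of_nonneg hQ,
    inv_mul_eq_div]
  exact div_le_of_le_mul₀ hQ ((norm_nonneg _).trans (hσ 1 le_rfl)) hnum

theorem Tmean_le_sigmaStar_nonincreasing_general
    (m : ℕ → ℕ)
    (μ : Measure (G m))
    (q : ℕ → ℝ) (hq : ∀ k, 0 ≤ q k) (hmono : Antitone q)
    (f : G m → ℂ) :
    (∀ n : ℕ, 1 ≤ n → ∀ x : G m,
        ENNReal.ofReal (‖Tmean m q (fourierCoeff m μ f) n x‖) ≤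
          sigmaStar m (fourierCoeff m μ f) x) ∧
      ∀ x : G m, Tstar m q (fourierCoeff m μ f) x ≤ sigmaStar m (fourierCoeff m μ f) x := by
  set fhat := fourierCoeff m μ f
  have hT : ∀ n x, ENNReal.ofReal ‖Tmean m q fhat n x‖ ≤ sigmaStar m fhat x := by
    intro n x
    by_cases htop : sigmaStar m fhat x = ⊤
    · exact htop ▸ le_top
    refine ENNReal.ofReal_le_of_le_toReal (norm_Tmean_le m hmono hq (fun k hk => ?_) n)
    exact (ENNReal.ofReal_le_iff_le_toReal htop).mp (ofReal_norm_sigmaMean_le_sigmaStar m hk)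
  exact ⟨fun n _ x => hT n x, fun x => iSup₂_le fun n _ => hT n x⟩

/-- For a non-increasing nonnegative weight sequence `q` with `q 0 > 0` and any
integrable `f`, one has `|T_n f| ≤ σ^* f` pointwise for all `n ≥ 1`, hence `T^* f ≤ σ^* f`. -/
theorem Tmean_le_sigmaStar_nonincreasing
    (m : ℕ → ℕ) (hm : ∀ k, 2 ≤ m k) (hbdd : ∃ Λ : ℕ, ∀ k, m k ≤ Λ)
    (μ : Measure (G m)) (hμ : IsHaar m μ)
    (q : ℕ → ℝ) (hq : ∀ k, 0 ≤ q k) (hq0 : 0 < q 0) (hmono : Antitone q)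
    (f : G m → ℂ) (hf : Integrable f μ) :
    (∀ n : ℕ, 1 ≤ n → ∀ x : G m,
        ENNReal.ofReal (‖Tmean m q (fourierCoeff m μ f) n x‖) ≤
          sigmaStar m (fourierCoeff m μ f) x) ∧
      ∀ x : G m, Tstar m q (fourierCoeff m μ f) x ≤ sigmaStar m (fourierCoeff m μ f) x :=
  Tmean_le_sigmaStar_nonincreasing_general m μ q hq hmono f

end VilenkinT
end
end

section
/- Let α > 0 and β ∈ ℕ with β ≥ 1, and let q_k := max(0, log^{(β)}(k^α)) and Q_n := ∑_{k=0}^{n-1} q_k. Then (i) there exists N such that for all n ≥ N, (n/2)·log^{(β)}((n/2)^α) ≤ Q_n ≤ n·log^{(β)}(n^α); (ii) there exists C > 0 such that n·q_{n-1} ≤ C·Q_n for all n ≥ 1 (in particular q_{n-1}/Q_n = O(1/n)). -/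
open MeasureTheory Complex Finset ENNReal

noncomputable section

/-!
Past the point where `k ^ α` exceeds the exponential tower of height `β`, the weights are the
genuine iterated logarithms `F k = log^[β] (k ^ α)`, which increase to infinity and vary slowly:
`F x - F y ≤ α (x - y) / y` for `y ≤ x`, because each logarithm beyond the first is
1-Lipschitz on `[1, ∞)`. Monotonicity bounds every late term of `Q_n` by `F n`, and the finitely
many early terms are absorbed once `F n` is large. The `⌈n/2⌉` terms from `⌊n/2⌋` on are each at
least `F ⌊n/2⌋`, and slow variation turns this into `(n/2) F (n/2)`. Finally
`q_{n-1} ≤ F (n/2) + α ≤ 2 F (n/2)`, so the lower bound gives `n q_{n-1} ≤ 4 Q_n` for large `n`.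
-/

open Filter

lemma Real.log_sub_log_le_div {a b : ℝ} (ha : 0 < a) (hb : 0 < b) :
    Real.log a - Real.log b ≤ (a - b) / b := by
  rw [← Real.log_div ha.ne' hb.ne', sub_div, div_self hb.ne']
  exact Real.log_le_sub_one_of_pos (div_pos ha hb)

lemma Real.log_sub_log_le_sub {a b : ℝ} (hb : 1 ≤ b) (hba : b ≤ a) :
    Real.log a - Real.log b ≤ a - b :=
  (Real.log_sub_log_le_div (by linarith) (by linarith)).trans (div_le_self (by linarith) hb)

def tower : ℕ → ℝ
  | 0 => 1
  | j + 1 => Real.exp (tower j)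

lemma tower_le_tower_succ (j : ℕ) : tower j ≤ tower (j + 1) := by
  linarith [Real.add_one_le_exp (tower j), show tower (j + 1) = Real.exp (tower j) from rfl]

lemma one_le_iterate_log {j : ℕ} {x : ℝ} (hx : tower j ≤ x) : 1 ≤ Real.log^[j] x := by
  induction j generalizing x with
  | zero => simpa [tower] using hx
  | succ j ih =>
    rw [Function.iterate_succ_apply]
    exact ih ((Real.le_log_iff_exp_le (lt_of_lt_of_le (Real.exp_pos _) hx)).2 hx)

lemma monotoneOn_iterate_log (j : ℕ) : MonotoneOn (Real.log^[j]) (Set.Ici (tower j)) := by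
  induction j with
  | zero => exact monotone_id.monotoneOn _
  | succ j ih =>
    intro x hx y hy hxy
    have hx0 : 0 < x := lt_of_lt_of_le (Real.exp_pos _) hx
    have hlog : ∀ {z : ℝ}, tower (j + 1) ≤ z → tower j ≤ Real.log z := fun hz =>
      (Real.le_log_iff_exp_le (lt_of_lt_of_le (Real.exp_pos _) hz)).2 hz
    rw [Function.iterate_succ_apply, Function.iterate_succ_apply]
    exact ih (hlog hx) (hlog hy) (Real.log_le_log hx0 hxy)

lemma iterate_log_succ_sub_le {j : ℕ} {x y : ℝ} (hy : tower j ≤ y) (hyx : y ≤ x) :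
    Real.log^[j + 1] x - Real.log^[j + 1] y ≤ Real.log x - Real.log y := by
  induction j generalizing x y with
  | zero => simp
  | succ j ih =>
    rw [Function.iterate_succ_apply' _ (j + 1), Function.iterate_succ_apply' _ (j + 1)]
    calc Real.log (Real.log^[j + 1] x) - Real.log (Real.log^[j + 1] y)
        ≤ Real.log^[j + 1] x - Real.log^[j + 1] y :=
          Real.log_sub_log_le_sub (one_le_iterate_log hy)
            (monotoneOn_iterate_log _ hy (hy.trans hyx) hyx)
      _ ≤ Real.log x - Real.log y := ih ((tower_le_tower_succ j).trans hy) hyx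

lemma tendsto_iterate_log_atTop (j : ℕ) : Tendsto (Real.log^[j]) atTop atTop := by
  induction j with
  | zero => exact tendsto_id
  | succ j ih => simpa only [Function.iterate_succ] using ih.comp Real.tendsto_log_atTop

namespace VilenkinT

lemma Qsum_le_mul {q : ℕ → ℝ} {n : ℕ} {c : ℝ} (h : ∀ k < n, q k ≤ c) :
    Qsum q n ≤ n * c := by
  simpa [Qsum] using Finset.sum_le_card_nsmul (range n) q c fun k hk => h k (mem_range.1 hk)

lemma sub_mul_le_Qsum {q : ℕ → ℝ} (hq : ∀ k, 0 ≤ q k) {m n : ℕ} (hmn : m ≤ n) {c : ℝ}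
    (h : ∀ k, m ≤ k → k < n → c ≤ q k) : ((n : ℝ) - m) * c ≤ Qsum q n := by
  have hsub : ∑ k ∈ Ico m n, q k ≤ Qsum q n :=
    Finset.sum_le_sum_of_subset_of_nonneg (fun k hk => mem_range.2 (mem_Ico.1 hk).2)
      fun k _ _ => hq k
  have hcard := Finset.card_nsmul_le_sum (Ico m n) q c fun k hk =>
    h k (mem_Ico.1 hk).1 (mem_Ico.1 hk).2
  rw [Nat.card_Ico, nsmul_eq_mul, Nat.cast_sub hmn] at hcard
  linarith

lemma le_Qsum {q : ℕ → ℝ} (hq : ∀ k, 0 ≤ q k) {k n : ℕ} (hkn : k < n) : q k ≤ Qsum q n :=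
  Finset.single_le_sum (fun j _ => hq j) (mem_range.2 hkn)

lemma qB_nonneg (α : ℝ) (β k : ℕ) : 0 ≤ qB α β k := le_max_left _ _

section Weights

variable {α : ℝ} {β : ℕ}

lemma iterate_log_rpow_le (hα : 0 ≤ α) {x y : ℝ} (hy0 : 0 ≤ y) (hy : tower β ≤ y ^ α)
    (hyx : y ≤ x) : Real.log^[β] (y ^ α) ≤ Real.log^[β] (x ^ α) :=
  monotoneOn_iterate_log β hy (hy.trans (Real.rpow_le_rpow hy0 hyx hα))
    (Real.rpow_le_rpow hy0 hyx hα)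

lemma iterate_log_rpow_sub_le (hα : 0 ≤ α) (hβ : 1 ≤ β) {x y : ℝ} (hy0 : 0 < y)
    (hy : tower β ≤ y ^ α) (hyx : y ≤ x) :
    Real.log^[β] (x ^ α) - Real.log^[β] (y ^ α) ≤ α * ((x - y) / y) := by
  obtain ⟨j, rfl⟩ : ∃ j, β = j + 1 := ⟨β - 1, by omega⟩
  have hx0 : 0 < x := hy0.trans_le hyx
  calc Real.log^[j + 1] (x ^ α) - Real.log^[j + 1] (y ^ α)
      ≤ Real.log (x ^ α) - Real.log (y ^ α) :=
        iterate_log_succ_sub_le ((tower_le_tower_succ j).trans hy)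
          (Real.rpow_le_rpow hy0.le hyx hα)
    _ = α * (Real.log x - Real.log y) := by
        rw [Real.log_rpow hx0, Real.log_rpow hy0]; ring
    _ ≤ α * ((x - y) / y) := mul_le_mul_of_nonneg_left (Real.log_sub_log_le_div hx0 hy0) hα

lemma qB_eq_iterate_log {k : ℕ} (hk : tower β ≤ (k : ℝ) ^ α) :
    qB α β k = Real.log^[β] ((k : ℝ) ^ α) :=
  max_eq_right (zero_le_one.trans (one_le_iterate_log hk))

lemma exists_threshold (hα : 0 < α) (β : ℕ) :
    ∃ K : ℕ, 1 ≤ K ∧ ∀ y : ℝ, K ≤ y → tower β ≤ y ^ α ∧ 2 * α ≤ Real.log^[β] (y ^ α) := by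
  obtain ⟨R, hR⟩ := eventually_atTop.1
    (((tendsto_rpow_atTop hα).eventually_ge_atTop (tower β)).and
      (((tendsto_iterate_log_atTop β).comp (tendsto_rpow_atTop hα)).eventually_ge_atTop (2 * α)))
  refine ⟨max 1 ⌈R⌉₊, le_max_left _ _, fun y hy => hR y ?_⟩
  calc R ≤ ⌈R⌉₊ := Nat.le_ceil R
    _ ≤ y := le_trans (by exact_mod_cast le_max_right 1 ⌈R⌉₊) hy

variable {K : ℕ}

lemma Qsum_qB_le (hα : 0 < α)
    (hK : ∀ k : ℕ, K ≤ k → tower β ≤ (k : ℝ) ^ α) {n : ℕ}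
    (hn : Qsum (qB α β) K ≤ Real.log^[β] ((n : ℝ) ^ α)) :
    Qsum (qB α β) n ≤ n * Real.log^[β] ((n : ℝ) ^ α) := by
  refine Qsum_le_mul fun k hk => ?_
  rcases lt_or_ge k K with hkK | hKk
  · exact (le_Qsum (qB_nonneg α β) hkK).trans hn
  · have hk' := hK k hKk
    rw [qB_eq_iterate_log hk']
    exact iterate_log_rpow_le hα.le k.cast_nonneg hk' (by exact_mod_cast hk.le)

lemma eventually_Qsum_qB_le (hα : 0 < α) (β : ℕ) :
    ∀ᶠ n : ℕ in atTop, Qsum (qB α β) n ≤ n * Real.log^[β] ((n : ℝ) ^ α) := by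
  obtain ⟨K, -, hK⟩ := exists_threshold hα β
  have hlarge := ((tendsto_iterate_log_atTop β).comp
    ((tendsto_rpow_atTop hα).comp tendsto_natCast_atTop_atTop)).eventually_ge_atTop
      (Qsum (qB α β) K)
  filter_upwards [hlarge] with n hn
  exact Qsum_qB_le hα (fun k hk => (hK k (by exact_mod_cast hk)).1) hn

lemma half_mul_le_Qsum_qB (hα : 0 < α) (hβ : 1 ≤ β) (hK1 : 1 ≤ K)
    (hK : ∀ y : ℝ, K ≤ y → tower β ≤ y ^ α ∧ 2 * α ≤ Real.log^[β] (y ^ α)) {n : ℕ}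
    (hn : 2 * K ≤ n) :
    (n : ℝ) / 2 * Real.log^[β] (((n : ℝ) / 2) ^ α) ≤ Qsum (qB α β) n := by
  set F : ℝ → ℝ := fun y => Real.log^[β] (y ^ α)
  set m := n / 2
  have hm_le : (m : ℝ) ≤ n / 2 := by
    rw [le_div_iff₀ two_pos]; exact_mod_cast Nat.div_mul_le_self n 2
  have hle_m : (n : ℝ) / 2 ≤ m + 1 / 2 := by
    have h : (n : ℝ) ≤ m * 2 + 1 := by exact_mod_cast (by omega : n ≤ m * 2 + 1)
    rw [div_le_iff₀ two_pos]; linarith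
  have hKm : (K : ℝ) ≤ m := by exact_mod_cast (by omega : K ≤ m)
  have hm1 : (1 : ℝ) ≤ m := le_trans (by exact_mod_cast hK1) hKm
  obtain ⟨hmT, hmF⟩ := hK m hKm
  have hterms : ((n : ℝ) - m) * F m ≤ Qsum (qB α β) n := by
    refine sub_mul_le_Qsum (qB_nonneg α β) (Nat.div_le_self n 2) fun k hmk _ => ?_
    have hk : (K : ℝ) ≤ k := hKm.trans (by exact_mod_cast hmk)
    rw [qB_eq_iterate_log (hK k hk).1]
    exact iterate_log_rpow_le hα.le m.cast_nonneg hmT (by exact_mod_cast hmk)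
  have hslow : F (n / 2) - F m ≤ α * ((n / 2 - m) / m) :=
    iterate_log_rpow_sub_le hα.le hβ (by linarith) hmT hm_le
  -- `(n/2) / m ≤ 2`, and `2α ≤ F m` pays for the missing half term when `n` is odd
  have hcorr : (n : ℝ) / 2 * (α * ((n / 2 - m) / m)) ≤ (n / 2 - m) * F m := by
    have hratio : (n : ℝ) / 2 / m ≤ 2 := by rw [div_le_iff₀ (by linarith)]; linarith
    calc (n : ℝ) / 2 * (α * ((n / 2 - m) / m)) = (n / 2 - m) * (n / 2 / m * α) := by ring
      _ ≤ (n / 2 - m) * (2 * α) := by gcongr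
      _ ≤ (n / 2 - m) * F m := by gcongr
  calc (n : ℝ) / 2 * F (n / 2) ≤ n / 2 * (F m + α * ((n / 2 - m) / m)) := by gcongr; linarith
    _ = n / 2 * F m + n / 2 * (α * ((n / 2 - m) / m)) := by ring
    _ ≤ n / 2 * F m + (n / 2 - m) * F m := by gcongr
    _ = (n - m) * F m := by ring
    _ ≤ Qsum (qB α β) n := hterms

lemma qB_pred_le (hα : 0 < α) (hβ : 1 ≤ β) (hK1 : 1 ≤ K)
    (hK : ∀ y : ℝ, K ≤ y → tower β ≤ y ^ α ∧ 2 * α ≤ Real.log^[β] (y ^ α)) {n : ℕ}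
    (hn : 2 * K ≤ n) : qB α β (n - 1) ≤ 2 * Real.log^[β] (((n : ℝ) / 2) ^ α) := by
  have hn2 : (2 : ℝ) ≤ n := by exact_mod_cast (by omega : 2 ≤ n)
  have hcast : ((n - 1 : ℕ) : ℝ) = n - 1 := by rw [Nat.cast_sub (by omega)]; simp
  have hKhalf : (K : ℝ) ≤ n / 2 := by
    rw [le_div_iff₀ two_pos]; exact_mod_cast (by omega : K * 2 ≤ n)
  obtain ⟨hT, hF⟩ := hK _ hKhalf
  rw [qB_eq_iterate_log (hK _ (by rw [hcast]; linarith)).1, hcast]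
  have hslow := iterate_log_rpow_sub_le hα.le hβ (by linarith) hT
    (show (n : ℝ) / 2 ≤ n - 1 by linarith)
  have hratio : ((n : ℝ) - 1 - n / 2) / (n / 2) ≤ 1 := by rw [div_le_one (by linarith)]; linarith
  linarith [mul_le_of_le_one_right hα.le hratio]

end Weights

/-- Estimates for the weights `q_k = max(0, log^{(β)}(k^α))`:
`(n/2) log^{(β)}((n/2)^α) ≤ Q_n ≤ n log^{(β)}(n^α)` for all large `n`, and
`n q_{n-1} ≤ C Q_n` for all `n ≥ 1` (i.e. `q_{n-1}/Q_n = O(1/n)`). -/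
theorem qB_estimates (α : ℝ) (hα : 0 < α) (β : ℕ) (hβ : 1 ≤ β) :
    (∃ N : ℕ, ∀ n : ℕ, N ≤ n →
        (n : ℝ) / 2 * Real.log^[β] (((n : ℝ) / 2) ^ α) ≤ Qsum (qB α β) n ∧
          Qsum (qB α β) n ≤ (n : ℝ) * Real.log^[β] ((n : ℝ) ^ α)) ∧
      ∃ C : ℝ, 0 < C ∧ ∀ n : ℕ, 1 ≤ n → (n : ℝ) * qB α β (n - 1) ≤ C * Qsum (qB α β) n := by
  obtain ⟨K, hK1, hK⟩ := exists_threshold hα β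
  obtain ⟨N, hN⟩ := eventually_atTop.1 (eventually_Qsum_qB_le hα β)
  have hQ : ∀ n, 0 ≤ Qsum (qB α β) n := fun n => Finset.sum_nonneg fun k _ => qB_nonneg α β k
  refine ⟨⟨max N (2 * K), fun n hn => ⟨half_mul_le_Qsum_qB hα hβ hK1 hK (le_of_max_le_right hn),
    hN n (le_of_max_le_left hn)⟩⟩, 2 * K + 4, by positivity, fun n hn => ?_⟩
  rcases le_or_gt (2 * K) n with hKn | hnK
  · calc (n : ℝ) * qB α β (n - 1) ≤ n * (2 * Real.log^[β] (((n : ℝ) / 2) ^ α)) :=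
          mul_le_mul_of_nonneg_left (qB_pred_le hα hβ hK1 hK hKn) n.cast_nonneg
      _ = 4 * ((n : ℝ) / 2 * Real.log^[β] (((n : ℝ) / 2) ^ α)) := by ring
      _ ≤ 4 * Qsum (qB α β) n := by gcongr; exact half_mul_le_Qsum_qB hα hβ hK1 hK hKn
      _ ≤ (2 * K + 4) * Qsum (qB α β) n := mul_le_mul_of_nonneg_right (by linarith) (hQ n)
  · calc (n : ℝ) * qB α β (n - 1) ≤ (2 * K) * Qsum (qB α β) n := by
          gcongr
          · exact qB_nonneg α β _
          · exact_mod_cast hnK.le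
          · exact le_Qsum (qB_nonneg α β) (by omega)
      _ ≤ (2 * K + 4) * Qsum (qB α β) n := mul_le_mul_of_nonneg_right (by linarith) (hQ n)

end VilenkinT
end
end
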